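/- Let n be a natural number and let α, β be semigroup endomorphisms of T_n. Then the following are equivalent: (i) α R* β, i.e. for all semigroup endomorphisms γ, δ of T_n: γ·α = δ·α if and only if γ·β = δ·β; (ii) α R~ β, i.e. for every idempotent semigroup endomorphism η of T_n: η·α = α if and only if η·β = β; (iii) α and β have the same rank, i.e. (Set.range α).ncard = (Set.range β).ncard. -/

import Mathlib

/-- `s : Fin n → Fin n` is an odd permutation if it is the underlying function of some
permutation of sign `-1`. -/
def IsOddPerm {n : ℕ} (s : Fin n → Fin n) : Prop :=
  ∃ σ : Equiv.Perm (Fin n), Equiv.Perm.sign σ = -1 ∧ ⇑σ = s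

/-- `s : Fin n → Fin n` is an even permutation if it is the underlying function of some
permutation of sign `1`. -/
def IsEvenPerm {n : ℕ} (s : Fin n → Fin n) : Prop :=
  ∃ σ : Equiv.Perm (Fin n), Equiv.Perm.sign σ = 1 ∧ ⇑σ = s

/-- A pair `(t, e)` of elements of `T_n` is permissible if `t ∘ t ∘ t = t` and
`t ∘ e = e ∘ t = e ∘ e = e`. -/
def Permissible {n : ℕ} (t e : Fin n → Fin n) : Prop :=
  t ∘ t ∘ t = t ∧ t ∘ e = e ∧ e ∘ t = e ∧ e ∘ e = e

open Classical in
/-- For a (permissible) pair `(t, e)`, the map `φ_{t,e} : T_n → T_n` sending `s` to `t` if `s`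
is an odd permutation, to `t ∘ t` if `s` is an even permutation, and to `e` if `s` is not
bijective. -/
noncomputable def phi {n : ℕ} (t e : Fin n → Fin n) : (Fin n → Fin n) → (Fin n → Fin n) :=
  fun s => if IsOddPerm s then t else if IsEvenPerm s then t ∘ t else e

/-- `φ : T_n → T_n` is a semigroup endomorphism of `T_n` if `φ (s ∘ s') = φ s ∘ φ s'`
for all `s, s'`. -/
def IsEndo {n : ℕ} (φ : (Fin n → Fin n) → (Fin n → Fin n)) : Prop :=
  ∀ s s' : Fin n → Fin n, φ (s ∘ s') = φ s ∘ φ s'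

/-!
Everything is read off the kernel `Setoid.ker φ` of an endomorphism: `γ·α = δ·α` says that
`γ x` and `δ x` are `ker α`-related for every `x`, and the rank of `α` is the number of
`ker α`-classes.

A non-injective endomorphism `φ` identifies all constant maps. The permutations `σ` with
`φ σ = φ id` form a normal subgroup `K` of `S_n`, nontrivial by a counting argument and hence
transitive, and this forces `φ` to identify all singular maps as well. So `ker φ` is `⊥`, `⊤`, or
`unitSetoid K`: one class of singular maps, and the cosets of `K` among the permutations. Since
`K` is `S_n`, `A_n` or (for `n = 4`) the Klein four-group, these kernels form a chain, so
endomorphisms of equal rank have equal kernels. Each kernel is also the kernel of an idempotent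
endomorphism `η`, a retraction of `S_n` onto a complement of `K` fixing a point `q`, extended by
the constant map at `q`; then `η·β = β`, and `η·α = α` forces `ker β ≤ ker α`.
-/

namespace Setoid

variable {X Y Z : Type*}

theorem ncard_range_eq_of_ker_eq {f : X → Y} {g : X → Z} (h : ker f = ker g) :
    (Set.range f).ncard = (Set.range g).ncard := by
  rw [← Nat.card_coe_set_eq, ← Nat.card_coe_set_eq, ← Nat.card_congr (quotientKerEquivRange f),
    ← Nat.card_congr (quotientKerEquivRange g), h]

theorem ker_eq_of_le_of_ncard_range_eq [Finite X] {f : X → Y} {g : X → Z} (hle : ker f ≤ ker g)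
    (h : (Set.range f).ncard = (Set.range g).ncard) : ker f = ker g := by
  have hcard : Nat.card (Quotient (ker f)) ≤ Nat.card (Quotient (ker g)) := by
    rw [Nat.card_congr (quotientKerEquivRange f), Nat.card_congr (quotientKerEquivRange g),
      Nat.card_coe_set_eq, Nat.card_coe_set_eq, h]
  have hsurj : Function.Surjective (map_of_le hle) :=
    Quotient.ind fun x => ⟨Quotient.mk _ x, rfl⟩
  refine le_antisymm hle fun x y hxy => Quotient.exact ((hsurj.bijective_of_nat_card_le hcard).1
    (Quotient.sound hxy : map_of_le hle (Quotient.mk _ x) = map_of_le hle (Quotient.mk _ y)))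

theorem ker_le_of_comp_eq {η : X → X} {f : X → Y} (hf : (fun x => f (η x)) = f) :
    ker η ≤ ker f := fun x y hxy => by
  rw [ker_def, ← congrFun hf x, ← congrFun hf y]
  exact congrArg f hxy

theorem comp_eq_of_ker_le {η : X → X} (hη : (fun x => η (η x)) = η) {f : X → Y}
    (h : ker η ≤ ker f) : (fun x => f (η x)) = f :=
  funext fun x => h (congrFun hη x)

end Setoid

open Function Equiv

theorem Function.update_id_comp_update_id {α : Type*} [DecidableEq α] {p w w' : α} (h : w' ≠ p) :
    update id p w ∘ update id p w' = update id p w' := by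
  funext z
  by_cases hz : z = p
  · subst hz; simp [h]
  · simp [hz]

namespace Equiv.Perm

theorem comp_update_id_comp_inv {α : Type*} [DecidableEq α] (σ : Perm α) (p w : α) :
    ⇑σ ∘ update id p w ∘ ⇑σ⁻¹ = update id (σ p) (σ w) := by
  funext z
  by_cases hz : z = σ p
  · subst hz; simp
  · have : σ.symm z ≠ p := fun h => hz (by rw [← h, apply_symm_apply])
    simp [hz, this]

section Normal

variable {α : Type*} {K : Subgroup (Perm α)}

abbrev IsFixedPointFreeInvolution (σ : Perm α) : Prop :=
  σ * σ = 1 ∧ ∀ x, σ x ≠ x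

theorem exists_mem_apply_eq_of_normal [K.Normal] (hK : K ≠ ⊥) (a b : α) :
    ∃ σ ∈ K, σ a = b := by
  obtain ⟨σ, hσ, h1⟩ := K.bot_or_exists_ne_one.resolve_left hK
  have : MulAction.IsPretransitive K α := by
    refine MulAction.IsQuasiPreprimitive.isPretransitive_of_normal fun h =>
      h1 (Equiv.ext fun x => ?_)
    have hx : x ∈ MulAction.fixedPoints K α := h ▸ Set.mem_univ x
    exact hx ⟨σ, hσ⟩
  obtain ⟨⟨σ, hσ⟩, h⟩ := MulAction.exists_smul_eq K a b
  exact ⟨σ, hσ, h⟩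

theorem le_alternatingGroup_or_eq_top [Fintype α] [DecidableEq α]
    (hA : alternatingGroup α ≤ K) : K ≤ alternatingGroup α ∨ K = ⊤ := by
  refine or_iff_not_imp_left.2 fun h => ?_
  obtain ⟨σ, hσK, hσ⟩ := SetLike.not_le_iff_exists.1 h
  replace hσ := Int.units_ne_iff_eq_neg.1 hσ
  refine eq_top_iff.2 fun τ _ => ?_
  by_cases hτ : sign τ = 1
  · exact hA hτ
  · replace hτ := Int.units_ne_iff_eq_neg.1 hτ
    have : τ * σ⁻¹ ∈ alternatingGroup α := by
      rw [mem_alternatingGroup, sign_mul, sign_inv, hτ, hσ]; decide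
    simpa using K.mul_mem (hA this) hσK

variable [DecidableEq α] [K.Normal]

theorem swap_mul_swap_apply_mem {σ : Perm α} (hσ : σ ∈ K) (x y : α) :
    swap x y * swap (σ x) (σ y) ∈ K := by
  have h : swap x y * swap (σ x) (σ y) = swap x y * σ * (swap x y)⁻¹ * σ⁻¹ := by
    rw [swap_apply_apply, swap_inv]; group
  rw [h]
  exact K.mul_mem (Subgroup.Normal.conj_mem inferInstance σ hσ _) (K.inv_mem hσ)

variable [Fintype α]

theorem alternatingGroup_le_of_isThreeCycle_mem {τ : Perm α} (hτ : IsThreeCycle τ)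
    (hK : τ ∈ K) : alternatingGroup α ≤ K := by
  rw [← closure_three_cycles_eq_alternating, Subgroup.closure_le]
  intro g hg
  obtain ⟨c, rfl⟩ :=
    isConj_iff.1 (isConj_iff_cycleType_eq.2 (hτ.cycleType.trans hg.cycleType.symm))
  exact Subgroup.Normal.conj_mem inferInstance _ hK c

/-- The commutator of `σ` with `swap a (σ a)` is a 3-cycle. -/
theorem alternatingGroup_le_of_apply_apply_ne {σ : Perm α} (hσ : σ ∈ K) {a : α}
    (h1 : σ a ≠ a) (h2 : σ (σ a) ≠ a) : alternatingGroup α ≤ K := by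
  have h3 : σ (σ a) ≠ σ a := fun h => h1 (σ.injective h)
  refine alternatingGroup_le_of_isThreeCycle_mem ?_ (swap_mul_swap_apply_mem hσ a (σ a))
  rw [swap_comm a]
  exact isThreeCycle_swap_mul_swap_same h1 h3.symm h2.symm

theorem alternatingGroup_le_of_apply_ne_of_apply_eq {σ : Perm α} (hσ : σ ∈ K) {a c : α}
    (ha : σ a ≠ a) (hc : σ c = c) : alternatingGroup α ≤ K := by
  by_cases h2 : σ (σ a) = a
  · have hca : c ≠ a := by rintro rfl; exact ha hc
    have hcb : c ≠ σ a := by rintro rfl; exact ha (hc.symm.trans h2)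
    refine alternatingGroup_le_of_isThreeCycle_mem ?_ (swap_mul_swap_apply_mem hσ (σ a) c)
    rw [h2, hc, swap_comm (σ a), swap_comm a]
    exact isThreeCycle_swap_mul_swap_same hcb hca ha
  · exact alternatingGroup_le_of_apply_apply_ne hσ ha h2

theorem alternatingGroup_le_of_not_isFixedPointFreeInvolution {σ : Perm α} (hσ : σ ∈ K)
    (h1 : σ ≠ 1) (hσ' : ¬ σ.IsFixedPointFreeInvolution) : alternatingGroup α ≤ K := by
  obtain ⟨a, ha⟩ : ∃ a, σ a ≠ a := not_forall.1 fun h => h1 (Equiv.ext h)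
  by_cases hsq : σ * σ = 1
  · obtain ⟨c, hc⟩ := not_forall_not.1 fun h => hσ' ⟨hsq, h⟩
    exact alternatingGroup_le_of_apply_ne_of_apply_eq hσ ha hc
  · obtain ⟨x, hx⟩ : ∃ x, σ (σ x) ≠ x := not_forall.1 fun h => hsq (Equiv.ext h)
    exact alternatingGroup_le_of_apply_apply_ne hσ (fun h => hx (by rw [h, h])) hx

end Normal

section KleinFour

theorem exists_conj_eq_of_isFixedPointFreeInvolution {σ τ : Perm (Fin 4)}
    (hσ : σ.IsFixedPointFreeInvolution) (hτ : τ.IsFixedPointFreeInvolution) :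
    ∃ g : Perm (Fin 4), g * σ * g⁻¹ = τ := by
  revert σ τ
  decide

set_option maxRecDepth 10000 in
def kleinFour : Subgroup (Perm (Fin 4)) where
  carrier := {σ | σ = 1 ∨ σ.IsFixedPointFreeInvolution}
  one_mem' := Or.inl rfl
  mul_mem' := by
    simp only [Set.mem_ofPred_eq]
    decide
  inv_mem' := by
    simp only [Set.mem_ofPred_eq]
    decide

theorem mem_kleinFour {σ : Perm (Fin 4)} :
    σ ∈ kleinFour ↔ σ = 1 ∨ σ.IsFixedPointFreeInvolution :=
  Iff.rfl

instance kleinFour_normal : kleinFour.Normal where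
  conj_mem σ hσ g := by
    rcases hσ with rfl | ⟨hsq, hfree⟩
    · exact Or.inl (by group)
    refine Or.inr ⟨?_, fun x hx => hfree (g⁻¹ x) ?_⟩
    · rw [show g * σ * g⁻¹ * (g * σ * g⁻¹) = g * (σ * σ) * g⁻¹ by group, hsq]
      group
    · calc σ (g⁻¹ x) = g⁻¹ ((g * σ * g⁻¹) x) := by simp
        _ = g⁻¹ x := by rw [hx]

theorem kleinFour_le_alternatingGroup : kleinFour ≤ alternatingGroup (Fin 4) := by
  intro σ
  simp only [mem_kleinFour, mem_alternatingGroup]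
  revert σ
  decide

/-- `kleinFour` acts simply transitively on `Fin 4`; this is its element sending `3` to `a`. -/
def kleinFourTo (a : Fin 4) : Perm (Fin 4) :=
  if a = 0 then swap 0 3 * swap 1 2
  else if a = 1 then swap 1 3 * swap 0 2
  else if a = 2 then swap 2 3 * swap 0 1
  else 1

theorem kleinFourTo_mem (a : Fin 4) : kleinFourTo a ∈ kleinFour := by
  rw [mem_kleinFour]; revert a; decide

theorem kleinFourTo_apply_three (a : Fin 4) : kleinFourTo a 3 = a := by
  revert a; decide

theorem kleinFourTo_three : kleinFourTo 3 = 1 := by decide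

theorem eq_kleinFourTo_of_mem {v : Perm (Fin 4)} (hv : v ∈ kleinFour) :
    v = kleinFourTo (v 3) := by
  revert v
  simp only [mem_kleinFour]
  decide

/-- The projection of `S₄ = kleinFour ⋊ Stab(3)` onto the stabiliser of `3`. -/
def kleinFourRetraction : Perm (Fin 4) →* Perm (Fin 4) where
  toFun g := g * kleinFourTo (g⁻¹ 3)
  map_one' := by decide
  map_mul' g h := by
    set w := h⁻¹ * kleinFourTo (g⁻¹ 3) * h * kleinFourTo (h⁻¹ 3)
    have hw : w ∈ kleinFour := kleinFour.mul_mem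
      (by simpa using Subgroup.Normal.conj_mem inferInstance _ (kleinFourTo_mem (g⁻¹ 3)) h⁻¹)
      (kleinFourTo_mem _)
    have hw3 : w 3 = (g * h)⁻¹ 3 := by
      simp [w, kleinFourTo_apply_three]
    calc g * h * kleinFourTo ((g * h)⁻¹ 3) = g * h * w := by
          rw [← hw3, ← eq_kleinFourTo_of_mem hw]
      _ = _ := by simp only [w]; group

theorem kleinFourRetraction_apply_three (g : Perm (Fin 4)) : kleinFourRetraction g 3 = 3 := by
  simp [kleinFourRetraction, kleinFourTo_apply_three]

theorem kleinFourRetraction_idem (g : Perm (Fin 4)) :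
    kleinFourRetraction (kleinFourRetraction g) = kleinFourRetraction g := by
  change kleinFourRetraction g * kleinFourTo ((kleinFourRetraction g)⁻¹ 3) = _
  rw [Perm.inv_eq_iff_eq.2 (kleinFourRetraction_apply_three g).symm, kleinFourTo_three, mul_one]

theorem ker_kleinFourRetraction : kleinFourRetraction.ker = kleinFour := by
  ext g
  rw [MonoidHom.mem_ker]
  change g * kleinFourTo (g⁻¹ 3) = 1 ↔ _
  rw [mul_eq_one_iff_eq_inv]
  constructor
  · intro h; rw [h]; exact kleinFour.inv_mem (kleinFourTo_mem _)
  · intro h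
    rw [← eq_kleinFourTo_of_mem (kleinFour.inv_mem h), inv_inv]

end KleinFour

section NormalSubgroups

variable {n : ℕ} {K : Subgroup (Perm (Fin n))} [K.Normal]

/-- The commutator of `σ` with `swap (σ a) c` is again a fixed-point-free involution, and it
moves only `a`, `σ a`, `c` and `σ c`. -/
theorem eq_four_of_forall_isFixedPointFreeInvolution
    (hV : ∀ σ ∈ K, σ ≠ 1 → σ.IsFixedPointFreeInvolution) {σ : Perm (Fin n)} (hσ : σ ∈ K)
    (h1 : σ ≠ 1) (hn : 2 < n) : n = 4 := by
  obtain ⟨hsq, hfree⟩ := hV σ hσ h1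
  have hinv : ∀ x, σ (σ x) = x := fun x => congrArg (· x) hsq
  obtain ⟨a, hab⟩ : ∃ a, σ a ≠ a := not_forall.1 fun h => h1 (Equiv.ext h)
  obtain ⟨c, -, hc⟩ := Finset.exists_mem_notMem_of_card_lt_card (s := {a, σ a})
    (t := Finset.univ) (Finset.card_le_two.trans_lt (by simpa using hn))
  simp only [Finset.mem_insert, Finset.mem_singleton, not_or] at hc
  obtain ⟨hca, hcb⟩ : c ≠ a ∧ c ≠ σ a := hc
  have hu : swap (σ a) c * swap a (σ c) ∈ K := by
    simpa only [hinv] using swap_mul_swap_apply_mem hσ (σ a) c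
  have hub : (swap (σ a) c * swap a (σ c)) (σ a) = c := by
    rw [Perm.mul_apply, swap_apply_of_ne_of_ne hab (σ.injective.ne hca).symm, swap_apply_left]
  obtain ⟨-, hufree⟩ := hV _ hu fun h => hcb (by rw [h] at hub; exact hub.symm)
  have huniv : (Finset.univ : Finset (Fin n)) = {a, σ a, c, σ c} := by
    refine Finset.eq_univ_of_forall (fun e => ?_) |>.symm
    by_contra he
    simp only [Finset.mem_insert, Finset.mem_singleton, not_or] at he
    apply hufree e
    rw [Perm.mul_apply, swap_apply_of_ne_of_ne he.1 he.2.2.2,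
      swap_apply_of_ne_of_ne he.2.1 he.2.2.1]
  rw [← Fintype.card_fin n, ← Finset.card_univ, huniv]
  exact Finset.card_eq_four.2 ⟨a, σ a, c, σ c, hab.symm, hca.symm,
    fun h => hcb (by rw [h, hinv]), hcb.symm, σ.injective.ne hca.symm, (hfree c).symm, rfl⟩

theorem alternatingGroup_le_or_eq_kleinFour (hK : K ≠ ⊥) :
    alternatingGroup (Fin n) ≤ K ∨
      (n = 4 ∧ ∀ σ, σ ∈ K ↔ σ = 1 ∨ σ.IsFixedPointFreeInvolution) := by
  by_cases hA : alternatingGroup (Fin n) ≤ K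
  · exact Or.inl hA
  right
  have hV : ∀ σ ∈ K, σ ≠ 1 → σ.IsFixedPointFreeInvolution := fun σ hσ h1 =>
    not_not.1 fun h => hA (alternatingGroup_le_of_not_isFixedPointFreeInvolution hσ h1 h)
  obtain ⟨σ, hσ, h1⟩ := K.bot_or_exists_ne_one.resolve_left hK
  have hn : 2 < n := by
    by_contra h
    exact hA ((alternatingGroup.eq_bot_of_card_le_two (by simp; omega)).le.trans bot_le)
  obtain rfl := eq_four_of_forall_isFixedPointFreeInvolution hV hσ h1 hn
  refine ⟨rfl, fun τ => ⟨fun hτ => (em (τ = 1)).imp_right (hV τ hτ), ?_⟩⟩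
  rintro (rfl | hτ)
  · exact K.one_mem
  · obtain ⟨g, rfl⟩ := exists_conj_eq_of_isFixedPointFreeInvolution (hV σ hσ h1) hτ
    exact Subgroup.Normal.conj_mem inferInstance σ hσ g

theorem le_total_of_normal {K' : Subgroup (Perm (Fin n))} [K'.Normal] (hK : K ≠ ⊥)
    (hK' : K' ≠ ⊥) : K ≤ K' ∨ K' ≤ K := by
  rcases alternatingGroup_le_or_eq_kleinFour hK with hA | ⟨rfl, hV⟩ <;>
    rcases alternatingGroup_le_or_eq_kleinFour hK' with hA' | ⟨h4, hV'⟩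
  · rcases le_alternatingGroup_or_eq_top hA with h | rfl
    · exact Or.inl (h.trans hA')
    · exact Or.inr le_top
  · subst h4
    exact Or.inr fun σ hσ => hA (kleinFour_le_alternatingGroup ((hV' σ).1 hσ))
  · exact Or.inl fun σ hσ => hA' (kleinFour_le_alternatingGroup ((hV σ).1 hσ))
  · exact Or.inl fun σ hσ => (hV' σ).2 ((hV σ).1 hσ)

end NormalSubgroups

section SignRetraction

variable {α : Type*} [Fintype α] [DecidableEq α] {a b : α}

def signRetraction (a b : α) : Perm α →* Perm α where
  toFun σ := if sign σ = 1 then 1 else swap a b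
  map_one' := by simp
  map_mul' σ τ := by
    rcases Int.units_eq_one_or (sign σ) with h | h <;>
      rcases Int.units_eq_one_or (sign τ) with h' | h' <;> simp [h, h']

theorem signRetraction_apply (σ : Perm α) :
    signRetraction a b σ = if sign σ = 1 then 1 else swap a b :=
  rfl

theorem signRetraction_apply_of_ne {c : α} (hca : c ≠ a) (hcb : c ≠ b) (σ : Perm α) :
    signRetraction a b σ c = c := by
  rw [signRetraction_apply]
  split_ifs <;> simp [swap_apply_of_ne_of_ne hca hcb]

theorem signRetraction_idem (hab : a ≠ b) (σ : Perm α) :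
    signRetraction a b (signRetraction a b σ) = signRetraction a b σ := by
  rw [signRetraction_apply σ]
  split_ifs <;> simp [signRetraction_apply, sign_swap hab]

theorem ker_signRetraction (hab : a ≠ b) : (signRetraction a b).ker = alternatingGroup α := by
  ext σ
  rw [MonoidHom.mem_ker, signRetraction_apply, mem_alternatingGroup]
  split_ifs with h <;> simp [h, swap_eq_one_iff, hab]

end SignRetraction

end Equiv.Perm

namespace Tn

variable {n : ℕ}

theorem exists_perm_or_not_bijective (s : Fin n → Fin n) :
    (∃ σ : Perm (Fin n), ⇑σ = s) ∨ ¬ Bijective s := by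
  by_cases h : Bijective s
  · exact Or.inl ⟨ofBijective s h, rfl⟩
  · exact Or.inr h

theorem not_bijective_comp_left {s : Fin n → Fin n} (hs : ¬ Bijective s) (t : Fin n → Fin n) :
    ¬ Bijective (s ∘ t) := fun h => hs (Finite.surjective_iff_bijective.1 h.2.of_comp)

theorem not_bijective_comp_right (s : Fin n → Fin n) {t : Fin n → Fin n} (ht : ¬ Bijective t) :
    ¬ Bijective (s ∘ t) := fun h => ht (Finite.injective_iff_bijective.1 h.1.of_comp)

theorem not_bijective_const (hn : 2 ≤ n) (q : Fin n) : ¬ Bijective (const (Fin n) q) := fun h =>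
  absurd (h.1 (a₁ := ⟨0, by omega⟩) (a₂ := ⟨1, by omega⟩) rfl) (by simp [Fin.ext_iff])

theorem ker_eq_ker_of_lt_two (hn : n < 2) (φ ψ : (Fin n → Fin n) → (Fin n → Fin n)) :
    Setoid.ker φ = Setoid.ker ψ := by
  have : Subsingleton (Fin n) := Fin.subsingleton_iff_le_one.2 (by omega)
  ext s t
  simp only [Setoid.ker_def, Subsingleton.elim (φ s) (φ t), Subsingleton.elim (ψ s) (ψ t)]

section UnitSetoid

variable {K K' : Subgroup (Perm (Fin n))}

open Classical in
noncomputable def unitClass (K : Subgroup (Perm (Fin n))) (s : Fin n → Fin n) :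
    Option (Perm (Fin n) ⧸ K) :=
  if h : Bijective s then some (QuotientGroup.mk (ofBijective s h)) else none

/-- The congruence of `T_n` with one class of singular maps, in which two permutations are
related when they lie in the same coset of `K`. -/
noncomputable def unitSetoid (K : Subgroup (Perm (Fin n))) : Setoid (Fin n → Fin n) :=
  Setoid.ker (unitClass K)

theorem unitClass_perm (σ : Perm (Fin n)) : unitClass K σ = some (QuotientGroup.mk σ) := by
  rw [unitClass, dif_pos σ.bijective, ofBijective_coe]

theorem unitClass_of_not_bijective {s : Fin n → Fin n} (hs : ¬ Bijective s) :
    unitClass K s = none :=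
  dif_neg hs

theorem unitSetoid_perm_iff {σ τ : Perm (Fin n)} : unitSetoid K σ τ ↔ σ⁻¹ * τ ∈ K := by
  rw [unitSetoid, Setoid.ker_def, unitClass_perm, unitClass_perm, Option.some_inj,
    QuotientGroup.eq]

theorem unitSetoid_of_not_bijective {s t : Fin n → Fin n} (hs : ¬ Bijective s)
    (ht : ¬ Bijective t) : unitSetoid K s t := by
  rw [unitSetoid, Setoid.ker_def, unitClass_of_not_bijective hs, unitClass_of_not_bijective ht]

theorem not_unitSetoid_perm (σ : Perm (Fin n)) {s : Fin n → Fin n} (hs : ¬ Bijective s) :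
    ¬ unitSetoid K σ s := by
  rw [unitSetoid, Setoid.ker_def, unitClass_perm, unitClass_of_not_bijective hs]
  exact Option.some_ne_none _

theorem unitSetoid_mono (h : K ≤ K') : unitSetoid K ≤ unitSetoid K' := by
  intro s t hst
  rcases exists_perm_or_not_bijective s with ⟨σ, rfl⟩ | hs <;>
    rcases exists_perm_or_not_bijective t with ⟨τ, rfl⟩ | ht
  · exact unitSetoid_perm_iff.2 (h (unitSetoid_perm_iff.1 hst))
  · exact absurd hst (not_unitSetoid_perm σ ht)
  · exact absurd ((unitSetoid K).symm' hst) (not_unitSetoid_perm τ hs)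
  · exact unitSetoid_of_not_bijective hs ht

theorem ker_eq_unitSetoid {X : Type*} {f : (Fin n → Fin n) → X}
    (hperm : ∀ σ τ : Perm (Fin n), f σ = f τ ↔ σ⁻¹ * τ ∈ K)
    (hsing : ∀ s t, ¬ Bijective s → ¬ Bijective t → f s = f t)
    (hne : ∀ (σ : Perm (Fin n)) s, ¬ Bijective s → f σ ≠ f s) :
    Setoid.ker f = unitSetoid K := by
  ext s t
  rw [Setoid.ker_def]
  rcases exists_perm_or_not_bijective s with ⟨σ, rfl⟩ | hs <;>
    rcases exists_perm_or_not_bijective t with ⟨τ, rfl⟩ | ht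
  · rw [hperm, unitSetoid_perm_iff]
  · exact iff_of_false (hne σ t ht) (not_unitSetoid_perm σ ht)
  · exact iff_of_false (fun h => hne τ s hs h.symm)
      fun h => not_unitSetoid_perm τ hs ((unitSetoid K).symm' h)
  · exact iff_of_true (hsing s t hs ht) (unitSetoid_of_not_bijective hs ht)

end UnitSetoid

section RetractEndo

variable (r : Perm (Fin n) →* Perm (Fin n)) (q : Fin n)

open Classical in
noncomputable def retractEndo : (Fin n → Fin n) → (Fin n → Fin n) :=
  fun s => if h : Bijective s then r (ofBijective s h) else const (Fin n) q

variable {r q}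

theorem retractEndo_perm (σ : Perm (Fin n)) : retractEndo r q σ = r σ := by
  rw [retractEndo, dif_pos σ.bijective, ofBijective_coe]

theorem retractEndo_of_not_bijective {s : Fin n → Fin n} (hs : ¬ Bijective s) :
    retractEndo r q s = const (Fin n) q :=
  dif_neg hs

theorem isEndo_retractEndo (hq : ∀ σ, r σ q = q) : IsEndo (retractEndo r q) := by
  intro s t
  rcases exists_perm_or_not_bijective s with ⟨σ, rfl⟩ | hs
  · rcases exists_perm_or_not_bijective t with ⟨τ, rfl⟩ | ht
    · rw [← Perm.coe_mul, retractEndo_perm, retractEndo_perm, retractEndo_perm, map_mul,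
        Perm.coe_mul]
    · rw [retractEndo_of_not_bijective ht, retractEndo_of_not_bijective
        (not_bijective_comp_right _ ht), retractEndo_perm, comp_const, hq]
  · rw [retractEndo_of_not_bijective hs, retractEndo_of_not_bijective
      (not_bijective_comp_left hs _), const_comp]

theorem retractEndo_idem (hr : ∀ σ, r (r σ) = r σ) (hn : 2 ≤ n) :
    (fun s => retractEndo r q (retractEndo r q s)) = retractEndo r q := by
  funext s
  rcases exists_perm_or_not_bijective s with ⟨σ, rfl⟩ | hs
  · rw [retractEndo_perm, retractEndo_perm, hr]
  · rw [retractEndo_of_not_bijective hs, retractEndo_of_not_bijective (not_bijective_const hn q)]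

theorem ker_retractEndo (hn : 2 ≤ n) : Setoid.ker (retractEndo r q) = unitSetoid r.ker := by
  refine ker_eq_unitSetoid (fun σ τ => ?_) (fun s t hs ht => ?_) (fun σ s hs h => ?_)
  · rw [retractEndo_perm, retractEndo_perm, Equiv.coe_inj, eq_comm, MonoidHom.eq_iff]
  · rw [retractEndo_of_not_bijective hs, retractEndo_of_not_bijective ht]
  · rw [retractEndo_perm, retractEndo_of_not_bijective hs] at h
    exact not_bijective_const hn q (h ▸ (r σ).bijective)

end RetractEndo

theorem exists_idempotent_ker_eq_unitSetoid (hn : 2 ≤ n) {K : Subgroup (Perm (Fin n))} [K.Normal]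
    (hK : K ≠ ⊥) : ∃ η, IsEndo η ∧ (fun x => η (η x)) = η ∧ Setoid.ker η = unitSetoid K := by
  suffices ∃ (r : Perm (Fin n) →* Perm (Fin n)) (q : Fin n),
      (∀ σ, r σ q = q) ∧ (∀ σ, r (r σ) = r σ) ∧ r.ker = K by
    obtain ⟨r, q, hq, hr, rfl⟩ := this
    exact ⟨retractEndo r q, isEndo_retractEndo hq, retractEndo_idem hr hn, ker_retractEndo hn⟩
  rcases Perm.alternatingGroup_le_or_eq_kleinFour hK with hA | ⟨rfl, hV⟩
  · rcases Perm.le_alternatingGroup_or_eq_top hA with hle | rfl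
    · have h2 : 2 < n := by
        by_contra h
        exact hK (le_bot_iff.1 (hle.trans (alternatingGroup.eq_bot_of_card_le_two
          (by simp; omega)).le))
      have h01 : (⟨0, by omega⟩ : Fin n) ≠ ⟨1, by omega⟩ := by simp [Fin.ext_iff]
      refine ⟨Perm.signRetraction ⟨0, by omega⟩ ⟨1, by omega⟩, ⟨2, h2⟩,
        Perm.signRetraction_apply_of_ne (by simp [Fin.ext_iff]) (by simp [Fin.ext_iff]),
        Perm.signRetraction_idem h01, ?_⟩
      rw [Perm.ker_signRetraction h01]
      exact le_antisymm hA hle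
    · exact ⟨1, ⟨0, by omega⟩, fun _ => rfl, fun _ => rfl, MonoidHom.ker_one⟩
  · exact ⟨Perm.kleinFourRetraction, 3, Perm.kleinFourRetraction_apply_three,
      Perm.kleinFourRetraction_idem,
      Perm.ker_kleinFourRetraction.trans (Subgroup.ext fun σ => (hV σ).symm)⟩

end Tn

namespace IsEndo

variable {n : ℕ} {φ ψ : (Fin n → Fin n) → (Fin n → Fin n)}

theorem id_comp (hφ : IsEndo φ) (s : Fin n → Fin n) : φ id ∘ φ s = φ s := by
  rw [← hφ, Function.id_comp]

theorem comp_id (hφ : IsEndo φ) (s : Fin n → Fin n) : φ s ∘ φ id = φ s := by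
  rw [← hφ, Function.comp_id]

theorem inv_comp (hφ : IsEndo φ) (σ : Perm (Fin n)) : φ ⇑σ⁻¹ ∘ φ σ = φ id := by
  rw [← hφ, ← Perm.coe_mul, inv_mul_cancel, Perm.coe_one]

theorem comp_inv (hφ : IsEndo φ) (σ : Perm (Fin n)) : φ σ ∘ φ ⇑σ⁻¹ = φ id := by
  rw [← hφ, ← Perm.coe_mul, mul_inv_cancel, Perm.coe_one]

def permKer (hφ : IsEndo φ) : Subgroup (Perm (Fin n)) where
  carrier := {σ | φ σ = φ id}
  one_mem' := rfl
  mul_mem' {σ τ} (hσ : φ σ = φ id) (hτ : φ τ = φ id) := by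
    change φ ⇑(σ * τ) = φ id
    rw [Perm.coe_mul, hφ, hσ, hτ, hφ.id_comp]
  inv_mem' {σ} (hσ : φ σ = φ id) := by
    change φ ⇑σ⁻¹ = φ id
    rw [← hφ.inv_comp σ, hσ, hφ.comp_id]

theorem mem_permKer (hφ : IsEndo φ) {σ : Perm (Fin n)} : σ ∈ hφ.permKer ↔ φ σ = φ id :=
  Iff.rfl

instance permKer_normal (hφ : IsEndo φ) : hφ.permKer.Normal where
  conj_mem σ hσ g := by
    rw [mem_permKer] at hσ ⊢
    rw [Perm.coe_mul, Perm.coe_mul, hφ, hφ, hσ, hφ.comp_id, hφ.comp_inv]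

theorem perm_eq_perm_iff (hφ : IsEndo φ) (σ τ : Perm (Fin n)) :
    φ σ = φ τ ↔ σ⁻¹ * τ ∈ hφ.permKer := by
  rw [mem_permKer, Perm.coe_mul, hφ]
  constructor
  · intro h; rw [← h, hφ.inv_comp]
  · intro h; rw [← hφ.comp_id σ, ← h, ← Function.comp_assoc, hφ.comp_inv, hφ.id_comp]

theorem const_eq_const (hφ : IsEndo φ) (hinj : ¬ Injective φ) (u v : Fin n) :
    φ (const _ u) = φ (const _ v) := by
  obtain ⟨a, b, hab, hne⟩ := not_injective_iff.1 hinj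
  obtain ⟨p, hp⟩ := Function.ne_iff.1 hne
  let s : Fin n → Fin n := fun z => if z = a p then u else v
  have hu : const (Fin n) u = s ∘ a ∘ const _ p := by funext; simp [s]
  have hv : const (Fin n) v = s ∘ b ∘ const _ p := by funext; simp [s, hp.symm]
  rw [hu, hv, hφ, hφ, hφ, hφ, hab]

theorem comp_const (hφ : IsEndo φ) (hinj : ¬ Injective φ) (s : Fin n → Fin n) (v : Fin n) :
    φ s ∘ φ (const _ v) = φ (const _ v) := by
  rw [← hφ, Function.comp_const, hφ.const_eq_const hinj]

theorem apply_mem_fixedPoints (hφ : IsEndo φ) {q : Fin n} (hq : ∀ σ : Perm (Fin n), φ σ q = q)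
    (σ : Perm (Fin n)) {x : Fin n} (hx : φ id x = x ∧ x ≠ q) :
    φ id (φ σ x) = φ σ x ∧ φ σ x ≠ q :=
  ⟨congrFun (hφ.id_comp σ) x, fun h => hx.2 (calc
    x = φ ⇑σ⁻¹ (φ σ x) := ((congrFun (hφ.inv_comp σ) x).trans hx.1).symm
    _ = q := by rw [h, hq])⟩

def permFixedPoints (hφ : IsEndo φ) {q : Fin n} (hq : ∀ σ : Perm (Fin n), φ σ q = q)
    (σ : Perm (Fin n)) : Perm {x // φ id x = x ∧ x ≠ q} where
  toFun x := ⟨φ σ x, hφ.apply_mem_fixedPoints hq σ x.2⟩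
  invFun x := ⟨φ ⇑σ⁻¹ x, hφ.apply_mem_fixedPoints hq σ⁻¹ x.2⟩
  left_inv x := Subtype.ext ((congrFun (hφ.inv_comp σ) x).trans x.2.1)
  right_inv x := Subtype.ext ((congrFun (hφ.comp_inv σ) x).trans x.2.1)

/-- Otherwise `σ ↦ φ σ` would embed `S_n` into the permutations of the fixed points of `φ id`
other than the common fixed point `q` of the `φ σ`: fewer than `n` points. -/
theorem permKer_ne_bot (hφ : IsEndo φ) (hn : 2 ≤ n) (hinj : ¬ Injective φ) :
    hφ.permKer ≠ ⊥ := by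
  intro hK
  let v : Fin n := ⟨0, by omega⟩
  set q := φ (const _ v) v
  have hq : ∀ σ : Perm (Fin n), φ σ q = q := fun σ => congrFun (hφ.comp_const hinj σ v) v
  have hinjective : Injective (hφ.permFixedPoints hq) := by
    intro σ τ h
    have hστ : φ σ = φ τ := by
      funext x
      rw [← hφ.comp_id σ, ← hφ.comp_id τ, comp_apply, comp_apply]
      by_cases hx : φ id x = q
      · rw [hx, hq, hq]
      · exact congrArg Subtype.val
          (DFunLike.congr_fun h ⟨φ id x, congrFun (hφ.id_comp id) x, hx⟩)
    rwa [hφ.perm_eq_perm_iff, hK, Subgroup.mem_bot, inv_mul_eq_one] at hστ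
  have hcard := Fintype.card_le_of_injective _ hinjective
  rw [Fintype.card_perm, Fintype.card_perm, Fintype.card_fin] at hcard
  have hF : Fintype.card {x // φ id x = x ∧ x ≠ q} ≤ n - 1 := by
    have := Fintype.card_subtype_lt (p := fun x => φ id x = x ∧ x ≠ q) (x := q) (by simp)
    rw [Fintype.card_fin] at this
    omega
  exact absurd hcard (not_le.2 ((Nat.factorial_le hF).trans_lt
    ((Nat.factorial_lt (by omega)).2 (by omega))))

/-- As `permKer` is transitive, `φ (update id p w)` is conjugate by some `φ σ = φ id` to one of
the `φ (update id u ·)`, which form a right-zero semigroup. -/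
theorem update_comp_update (hφ : IsEndo φ) (hn : 2 ≤ n) (hinj : ¬ Injective φ)
    {p w u w' : Fin n} (huw : w' ≠ u) :
    φ (update id p w) ∘ φ (update id u w') = φ (update id u w') := by
  obtain ⟨σ, hσK, hσ⟩ := Perm.exists_mem_apply_eq_of_normal (hφ.permKer_ne_bot hn hinj) u p
  have hσinv : φ ⇑σ⁻¹ = φ id := hφ.permKer.inv_mem hσK
  have hconj : update id p w = ⇑σ ∘ update id u (σ⁻¹ w) ∘ ⇑σ⁻¹ := by
    rw [Perm.comp_update_id_comp_inv, hσ, ← Perm.mul_apply, mul_inv_cancel, Perm.one_apply]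
  rw [hconj, hφ, hφ, (hσK : φ σ = φ id), hσinv, hφ.comp_id, hφ.id_comp, ← hφ,
    update_id_comp_update_id huw]

/-- The constant map is a product of the idempotents `update id a v`, and in the image of `φ`
only the rightmost factor survives. -/
theorem const_eq_update (hφ : IsEndo φ) (hn : 2 ≤ n) (hinj : ¬ Injective φ) {u v : Fin n}
    (huv : u ≠ v) : φ (const _ v) = φ (update id u v) := by
  have key : ∀ B : Finset (Fin n), v ∉ B →
      φ (fun z => if z ∈ B then v else z) ∘ φ (update id u v) = φ (update id u v) := by
    intro B
    induction B using Finset.induction_on with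
    | empty => intro _; simp only [Finset.notMem_empty, if_false]; exact hφ.id_comp _
    | insert a B ha ih =>
      intro hv
      have hsplit : (fun z => if z ∈ insert a B then v else z) =
          (fun z => if z ∈ B then v else z) ∘ update id a v := by
        funext z
        by_cases hz : z = a
        · subst hz; simp
        · simp [hz]
      rw [hsplit, hφ, comp_assoc, hφ.update_comp_update hn hinj huv.symm,
        ih fun h => hv (Finset.mem_insert_of_mem h)]
  have hconst : (fun z => if z ∈ Finset.univ.erase v then v else z) = const (Fin n) v := by
    funext z
    by_cases hz : z = v <;> simp [hz]
  rw [← const_comp (f := update id u v) (c := v), hφ, ← hconst, key _ (Finset.notMem_erase v _)]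

theorem apply_eq_of_not_bijective (hφ : IsEndo φ) (hn : 2 ≤ n) (hinj : ¬ Injective φ)
    {s : Fin n → Fin n} (hs : ¬ Bijective s) (v : Fin n) : φ s = φ (const _ v) := by
  obtain ⟨u, w, hsuw, huw⟩ := not_injective_iff.1 (mt Finite.injective_iff_bijective.1 hs)
  have hs : s = s ∘ update id u w := by
    funext z
    by_cases hz : z = u
    · subst hz; simp [hsuw]
    · simp [hz]
  rw [hs, hφ, ← hφ.const_eq_update hn hinj huw, hφ.comp_const hinj, hφ.const_eq_const hinj]

theorem ker_eq_top_or_unitSetoid (hφ : IsEndo φ) (hn : 2 ≤ n) (hinj : ¬ Injective φ) :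
    Setoid.ker φ = ⊤ ∨ Setoid.ker φ = Tn.unitSetoid hφ.permKer := by
  let v : Fin n := ⟨0, by omega⟩
  by_cases hE : φ id = φ (const _ v)
  · refine Or.inl (eq_top_iff.2 fun s t _ => ?_)
    have hconst : ∀ s, φ s = φ (const _ v) := fun s => by
      rw [← hφ.comp_id s, hE, hφ.comp_const hinj]
    exact (hconst s).trans (hconst t).symm
  refine Or.inr (Tn.ker_eq_unitSetoid hφ.perm_eq_perm_iff (fun s t hs ht => ?_)
    fun σ s hs h => hE ?_)
  · rw [hφ.apply_eq_of_not_bijective hn hinj hs v, hφ.apply_eq_of_not_bijective hn hinj ht v]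
  · rw [← hφ.inv_comp σ, h, hφ.apply_eq_of_not_bijective hn hinj hs v, hφ.comp_const hinj]

theorem ker_cases (hφ : IsEndo φ) (hn : 2 ≤ n) :
    Setoid.ker φ = ⊥ ∨ Setoid.ker φ = ⊤ ∨
      ∃ K : Subgroup (Perm (Fin n)), K.Normal ∧ K ≠ ⊥ ∧ Setoid.ker φ = Tn.unitSetoid K := by
  by_cases hinj : Injective φ
  · exact Or.inl (Setoid.ker_eq_bot_iff.2 hinj)
  rcases hφ.ker_eq_top_or_unitSetoid hn hinj with h | h
  · exact Or.inr (Or.inl h)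
  · exact Or.inr (Or.inr ⟨hφ.permKer, inferInstance, hφ.permKer_ne_bot hn hinj, h⟩)

theorem ker_le_total (hφ : IsEndo φ) (hψ : IsEndo ψ) :
    Setoid.ker φ ≤ Setoid.ker ψ ∨ Setoid.ker ψ ≤ Setoid.ker φ := by
  rcases lt_or_ge n 2 with hn | hn
  · exact Or.inl (Tn.ker_eq_ker_of_lt_two hn φ ψ).le
  rcases hφ.ker_cases hn with h | h | ⟨K, _, hK, h⟩ <;> rw [h]
  · exact Or.inl bot_le
  · exact Or.inr le_top
  rcases hψ.ker_cases hn with h' | h' | ⟨K', _, hK', h'⟩ <;> rw [h']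
  · exact Or.inr bot_le
  · exact Or.inl le_top
  · exact (Perm.le_total_of_normal hK hK').imp Tn.unitSetoid_mono Tn.unitSetoid_mono

theorem exists_idempotent_ker_eq (hφ : IsEndo φ) :
    ∃ η, IsEndo η ∧ (fun x => η (η x)) = η ∧ Setoid.ker η = Setoid.ker φ := by
  have hid : IsEndo (id : (Fin n → Fin n) → (Fin n → Fin n)) := fun _ _ => rfl
  rcases lt_or_ge n 2 with hn | hn
  · exact ⟨id, hid, rfl, Tn.ker_eq_ker_of_lt_two hn _ _⟩
  rcases hφ.ker_cases hn with h | h | ⟨K, _, hK, h⟩ <;> rw [h]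
  · exact ⟨id, hid, rfl, Setoid.ker_eq_bot_iff.2 injective_id⟩
  · exact ⟨fun _ => id, fun _ _ => rfl, rfl, eq_top_iff.2 fun _ _ _ => rfl⟩
  · exact Tn.exists_idempotent_ker_eq_unitSetoid hn hK

theorem ncard_range_eq_iff_ker_eq (hφ : IsEndo φ) (hψ : IsEndo ψ) :
    (Set.range φ).ncard = (Set.range ψ).ncard ↔ Setoid.ker φ = Setoid.ker ψ := by
  refine ⟨fun h => ?_, Setoid.ncard_range_eq_of_ker_eq⟩
  rcases hφ.ker_le_total hψ with hle | hle
  · exact Setoid.ker_eq_of_le_of_ncard_range_eq hle h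
  · exact (Setoid.ker_eq_of_le_of_ncard_range_eq hle h.symm).symm

theorem ker_le_of_forall_idempotent (hψ : IsEndo ψ)
    (h : ∀ η, IsEndo η → (fun x => η (η x)) = η →
      (fun x => ψ (η x)) = ψ → (fun x => φ (η x)) = φ) :
    Setoid.ker ψ ≤ Setoid.ker φ := by
  obtain ⟨η, hη, hidem, hker⟩ := hψ.exists_idempotent_ker_eq
  rw [← hker]
  exact Setoid.ker_le_of_comp_eq (h η hη hidem (Setoid.comp_eq_of_ker_le hidem hker.le))

end IsEndo

/-- For semigroup endomorphisms `α`, `β` of `T_n`, the following are equivalent: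
(i) `α R* β`; (ii) `α R~ β`; (iii) `α` and `β` have the same rank. -/
theorem Rstar_Rtilde_rank (n : ℕ) (α β : (Fin n → Fin n) → (Fin n → Fin n))
    (hα : IsEndo α) (hβ : IsEndo β) :
    ((∀ γ δ : (Fin n → Fin n) → (Fin n → Fin n), IsEndo γ → IsEndo δ →
        ((fun x => α (γ x)) = (fun x => α (δ x)) ↔
          (fun x => β (γ x)) = (fun x => β (δ x)))) ↔
      (Set.range α).ncard = (Set.range β).ncard) ∧
      ((∀ η : (Fin n → Fin n) → (Fin n → Fin n), IsEndo η → (fun x => η (η x)) = η →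
          ((fun x => α (η x)) = α ↔ (fun x => β (η x)) = β)) ↔
        (Set.range α).ncard = (Set.range β).ncard) := by
  have hcomp : ∀ {γ δ : (Fin n → Fin n) → (Fin n → Fin n)}, Setoid.ker α = Setoid.ker β →
      ((fun x => α (γ x)) = (fun x => α (δ x)) ↔ (fun x => β (γ x)) = fun x => β (δ x)) := by
    intro γ δ h
    simp only [funext_iff, ← Setoid.ker_def]
    rw [h]
  have htilde : (∀ η : (Fin n → Fin n) → (Fin n → Fin n), IsEndo η → (fun x => η (η x)) = η →
      ((fun x => α (η x)) = α ↔ (fun x => β (η x)) = β)) → Setoid.ker α = Setoid.ker β :=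
    fun h => le_antisymm (hα.ker_le_of_forall_idempotent fun η hη hidem => (h η hη hidem).1)
      (hβ.ker_le_of_forall_idempotent fun η hη hidem => (h η hη hidem).2)
  rw [hα.ncard_range_eq_iff_ker_eq hβ]
  exact ⟨⟨fun h => htilde fun η hη _ => h η id hη fun _ _ => rfl, fun h _ _ _ _ => hcomp h⟩,
    ⟨htilde, fun h _ _ _ => hcomp (δ := id) h⟩⟩
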